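/- arXiv:math/0212339 — 3 statements merged into one kernel-verified Lean document; each statement's English description precedes it below -/
import Mathlib

section
/- Let (A, 𝔪) be a Noetherian local ring with algebraically closed residue field and suppose A carries a filtration F = {F_i}_{i≥0} of ideals with F_0 = A, F_1 = 𝔪, F_i F_j ⊆ F_{i+j} for all i, j, such that the associated graded ring G_F = ⊕_{i≥0} F_i/F_{i+1} is an integral domain. Then every ideal F_i is integrally closed. -/
open IsLocalRing

universe u v

/-- `x` is integral over the ideal `I`: it satisfies an equation
`x^n + a_1 x^{n-1} + ⋯ + a_n = 0` with `a_s ∈ I^s`. -/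
def IsIntegralOverIdeal {A : Type*} [CommRing A] (I : Ideal A) (x : A) : Prop :=
  ∃ n : ℕ, 0 < n ∧ ∃ a : ℕ → A, (∀ s ∈ Finset.Icc 1 n, a s ∈ I ^ s) ∧
    x ^ n + ∑ s ∈ Finset.Icc 1 n, a s * x ^ (n - s) = 0

/-- An ideal is integrally closed if it contains every element integral over it. -/
def IdealIsIntegrallyClosed {A : Type*} [CommRing A] (I : Ideal A) : Prop :=
  ∀ x : A, IsIntegralOverIdeal I x → x ∈ I

/-- An ideal of a local ring is `𝔪`-primary if `𝔪^n ⊆ I ⊆ 𝔪` for some `n`. -/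
def IsMPrimary (A : Type*) [CommRing A] [IsLocalRing A] (I : Ideal A) : Prop :=
  ∃ n : ℕ, maximalIdeal A ^ n ≤ I ∧ I ≤ maximalIdeal A

/-- Example 3.3 (first part): if a Noetherian local ring with algebraically closed residue
field has a multiplicative filtration `F` with `F₀ = A`, `F₁ = 𝔪`, `F_i F_j ⊆ F_{i+j}`,
`∩ F_i = 0`, whose associated graded ring `⊕ F_i/F_{i+1}` is an integral domain (no nonzero
homogeneous zero-divisors), then every `F_i` is integrally closed. -/
theorem stmt4 (A : Type*) [CommRing A] [IsNoetherianRing A] [IsLocalRing A]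
    [IsAlgClosed (ResidueField A)]
    (F : ℕ → Ideal A) (hF0 : F 0 = ⊤) (hF1 : F 1 = maximalIdeal A)
    (hanti : ∀ i j : ℕ, i ≤ j → F j ≤ F i)
    (hmul : ∀ i j : ℕ, F i * F j ≤ F (i + j))
    (hsep : (⨅ i : ℕ, F i) = ⊥)
    (hdom : ∀ (i j : ℕ) (x y : A), x ∈ F i → y ∈ F j → x * y ∈ F (i + j + 1) →
      x ∈ F (i + 1) ∨ y ∈ F (j + 1)) :
    ∀ i : ℕ, IdealIsIntegrallyClosed (F i) := by
  intro i x hx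
  by_contra hxi
  have hx0 : x ≠ 0 := by rintro rfl; exact hxi (zero_mem _)
  have hex : ∃ m, x ∉ F m := by
    by_contra h
    push_neg at h
    have : x ∈ ⨅ i, F i := Ideal.mem_iInf.2 h
    rw [hsep] at this
    exact hx0 this
  classical
  set m := Nat.find hex with hm
  have hmspec : x ∉ F m := Nat.find_spec hex
  have hm1 : 1 ≤ m := by
    rcases Nat.eq_zero_or_pos m with h | h
    · exact absurd (hF0 ▸ Submodule.mem_top) (h ▸ hmspec)
    · exact h
  set d := m - 1 with hd
  have hxd : x ∈ F d := by
    by_contra h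
    exact Nat.find_min hex (show d < m by omega) h
  have hxd1 : x ∉ F (d + 1) := by
    have : d + 1 = m := by omega
    rw [this]; exact hmspec
  have hdi : d + 1 ≤ i := by
    by_contra h
    push_neg at h
    exact hxi (hanti i d (by omega) hxd)
  -- powers of x
  have hpow : ∀ n : ℕ, x ^ n ∈ F (n * d) ∧ x ^ n ∉ F (n * d + 1) := by
    intro n
    induction n with
    | zero =>
      constructor
      · simp [hF0]
      · simp only [pow_zero, zero_mul, zero_add, hF1]
        intro h1
        exact (IsLocalRing.maximalIdeal.isMaximal A).ne_top (Ideal.eq_top_of_isUnit_mem _ h1 isUnit_one)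
    | succ n ih =>
      constructor
      · have : x ^ n * x ∈ F (n * d + d) :=
          hmul (n * d) d (Ideal.mul_mem_mul ih.1 hxd)
        rw [pow_succ]
        convert this using 2
        ring
      · intro h
        have h' : x ^ n * x ∈ F (n * d + d + 1) := by
          rw [← pow_succ]
          convert h using 2
          ring
        rcases hdom (n * d) d (x ^ n) x ih.1 hxd h' with h1 | h2
        · exact ih.2 h1
        · exact hxd1 h2
  -- integrality data
  obtain ⟨n, hn, a, ha, heq⟩ := hx
  -- F i ^ s ≤ F (i * s)
  have hFpow : ∀ s : ℕ, F i ^ s ≤ F (i * s) := by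
    intro s
    induction s with
    | zero => simp [hF0]
    | succ s ih =>
      calc F i ^ (s + 1) = F i ^ s * F i := pow_succ _ _
        _ ≤ F (i * s) * F i := Ideal.mul_mono_left ih
        _ ≤ F (i * s + i) := hmul _ _
        _ = F (i * (s + 1)) := by ring_nf
  have hsum : (∑ s ∈ Finset.Icc 1 n, a s * x ^ (n - s)) ∈ F (n * d + 1) := by
    apply Ideal.sum_mem
    intro s hs
    simp only [Finset.mem_Icc] at hs
    have h1 : a s ∈ F (i * s) := hFpow s (ha s (Finset.mem_Icc.2 hs))
    have h2 : x ^ (n - s) ∈ F ((n - s) * d) := (hpow (n - s)).1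
    have h3 : a s * x ^ (n - s) ∈ F (i * s + (n - s) * d) :=
      hmul _ _ (Ideal.mul_mem_mul h1 h2)
    refine hanti _ _ ?_ h3
    have hsn : s + (n - s) = n := by omega
    calc n * d + 1 ≤ n * d + s := by omega
      _ = (s + (n - s)) * d + s := by rw [hsn]
      _ = s * (d + 1) + (n - s) * d := by ring
      _ ≤ s * i + (n - s) * d := by
          exact Nat.add_le_add_right (Nat.mul_le_mul_left s hdi) _
      _ = i * s + (n - s) * d := by ring
  have hxn : x ^ n ∈ F (n * d + 1) := by
    have : x ^ n = -(∑ s ∈ Finset.Icc 1 n, a s * x ^ (n - s)) := by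
      linear_combination heq
    rw [this]
    exact Submodule.neg_mem _ hsum
  exact (hpow n).2 hxn
end

section
/- Let (A, 𝔪) be a Noetherian local ring with algebraically closed residue field, equipped with a filtration F = {F_i} with F_1 = 𝔪, F_i F_j ⊆ F_{i+j}, whose associated graded ring G_F = ⊕ F_i/F_{i+1} is an integral domain. If I is an ideal with F_i ⊆ I ⊆ F_{i-1} and length_A(I/F_i) = 1, then I is integrally closed. -/
/-!
Write `I = (u) + F_{i+1}`. An element `x` integral over `I` already lies in `F_i`, because `F_i`
is integrally closed. Modulo `F_{i+1}` each coefficient `a_s ∈ I^s` of its equation is `c_s u^s`,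
so the binary form `x^n + ∑ c_s x^{n-s} u^s` of degree `n` vanishes in `F_{ni}/F_{ni+1}`. Over the
algebraically closed residue field this form is a product of linear forms `x - l u`, and since the
associated graded ring is a domain one of them vanishes in `F_i/F_{i+1}`, i.e. `x ∈ (u) + F_{i+1}`.
-/

open IsLocalRing

universe u v

section

open Polynomial Finset Ideal

variable {A : Type*} [CommRing A]

theorem IsIntegralOverIdeal.mono {I J : Ideal A} (hIJ : I ≤ J) {x : A}
    (hx : IsIntegralOverIdeal I x) : IsIntegralOverIdeal J x := by
  obtain ⟨n, hn, a, ha, heq⟩ := hx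
  exact ⟨n, hn, a, fun s hs => Ideal.pow_right_mono hIJ s (ha s hs), heq⟩

theorem Ideal.span_singleton_sup_eq_of_covBy {J I : Ideal A} (hJI : J ⋖ I) {u : A}
    (huI : u ∈ I) (huJ : u ∉ J) : span {u} ⊔ J = I := by
  refine ((hJI.eq_or_eq le_sup_right
    (sup_le ((span_singleton_le_iff_mem _).2 huI) hJI.le)).resolve_left fun h => huJ ?_)
  exact h ▸ mem_sup_left (mem_span_singleton_self u)

theorem Polynomial.eval_homogenize_eq_sum (p : A[X]) (n : ℕ) (x y : A) :
    MvPolynomial.eval ![x, y] (p.homogenize n) =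
      ∑ kl ∈ antidiagonal n, p.coeff kl.1 * x ^ kl.1 * y ^ kl.2 := by
  simp [homogenize, MvPolynomial.eval_monomial, Finsupp.prod_fintype, mul_assoc]

theorem Polynomial.eval_homogenize_multiset_prod_X_sub_C (L : Multiset A) (x y : A) :
    MvPolynomial.eval ![x, y] ((L.map fun l => X - C l).prod.homogenize (Multiset.card L)) =
      (L.map fun l => x - l * y).prod := by
  induction L using Multiset.induction_on with
  | empty => simp
  | cons a L ih =>
    nontriviality A
    rw [Multiset.map_cons, Multiset.prod_cons, Multiset.card_cons, add_comm,
      homogenize_mul _ _ (natDegree_X_sub_C a).le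
        (natDegree_multiset_prod_X_sub_C_eq_card L).le, map_mul, ih]
    simp [homogenize_sub]

theorem Polynomial.degree_sum_C_mul_X_pow_sub_lt {n : ℕ} (hn : 0 < n) (c : ℕ → A) :
    (∑ s ∈ Icc 1 n, C (c s) * X ^ (n - s)).degree < (n : WithBot ℕ) := by
  refine (degree_sum_le _ _).trans_lt ((Finset.sup_lt_iff (WithBot.bot_lt_coe n)).2 ?_)
  intro s hs
  refine (degree_C_mul_X_pow_le _ _).trans_lt ?_
  exact WithBot.coe_lt_coe.2 (Nat.sub_lt hn (mem_Icc.1 hs).1)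

theorem Polynomial.eval_homogenize_X_pow_add_sum (n : ℕ) (c : ℕ → A) (x y : A) :
    MvPolynomial.eval ![x, y] ((X ^ n + ∑ s ∈ Icc 1 n, C (c s) * X ^ (n - s)).homogenize n) =
      x ^ n + ∑ s ∈ Icc 1 n, c s * y ^ s * x ^ (n - s) := by
  simp only [homogenize_add, homogenize_finsetSum, homogenize_C_mul, map_add, map_sum, map_mul,
    homogenize_X_pow le_rfl, homogenize_X_pow (Nat.sub_le n _), map_pow, MvPolynomial.eval_C,
    MvPolynomial.eval_X, Matrix.cons_val_zero, Matrix.cons_val_one, Nat.sub_self, pow_zero,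
    mul_one]
  refine congrArg (x ^ n + ·) (sum_congr rfl fun s hs => ?_)
  rw [Nat.sub_sub_self (mem_Icc.1 hs).2]
  ring

theorem IsLocalRing.exists_multiset_map_residue_prod_X_sub_C_eq [IsLocalRing A]
    [IsAlgClosed (ResidueField A)] {q : A[X]} (hq : q.Monic) :
    ∃ L : Multiset A, Multiset.card L = q.natDegree ∧
      (L.map fun l => X - C l).prod.map (residue A) = q.map (residue A) := by
  obtain ⟨L, hL⟩ :=
    Multiset.map_surjective_of_surjective residue_surjective (q.map (residue A)).roots
  have hprod : (L.map fun l => X - C l).prod.map (residue A) = q.map (residue A) := by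
    rw [(IsAlgClosed.splits _).eq_prod_roots_of_monic (hq.map _), ← hL,
      Polynomial.map_multiset_prod, Multiset.map_map, Multiset.map_map]
    simp
  refine ⟨L, ?_, hprod⟩
  have := congrArg natDegree hprod
  rwa [(monic_multiset_prod_of_monic _ _ fun l _ => monic_X_sub_C l).natDegree_map,
    hq.natDegree_map, natDegree_multiset_prod_X_sub_C_eq_card] at this

structure IsMultiplicativeFiltration (F : ℕ → Ideal A) : Prop where
  zero_eq_top : F 0 = ⊤
  antitone : Antitone F
  mul_le : ∀ i j, F i * F j ≤ F (i + j)

/-- The associated graded ring `⊕ F i / F (i + 1)` is a domain: it is nonzero, and a product of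
initial forms of degrees `i` and `j` vanishes in degree `i + j` only if one of them does. -/
structure IsDomainFiltration (F : ℕ → Ideal A) : Prop
    extends IsMultiplicativeFiltration F where
  one_ne_top : F 1 ≠ ⊤
  mem_succ_or_mem_succ_of_mul_mem : ∀ {i j : ℕ} {x y : A}, x ∈ F i → y ∈ F j →
    x * y ∈ F (i + j + 1) → x ∈ F (i + 1) ∨ y ∈ F (j + 1)

namespace IsMultiplicativeFiltration

variable {F : ℕ → Ideal A}

theorem mul_mem (hF : IsMultiplicativeFiltration F) {i j : ℕ} {x y : A} (hx : x ∈ F i)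
    (hy : y ∈ F j) : x * y ∈ F (i + j) :=
  hF.mul_le i j (mul_mem_mul hx hy)

theorem pow_le (hF : IsMultiplicativeFiltration F) (i : ℕ) : ∀ s : ℕ, F i ^ s ≤ F (s * i)
  | 0 => by simp [hF.zero_eq_top, one_eq_top]
  | s + 1 =>
    calc F i ^ (s + 1) = F i ^ s * F i := pow_succ _ _
      _ ≤ F (s * i) * F i := mul_mono_left (hF.pow_le i s)
      _ ≤ F ((s + 1) * i) := (Nat.succ_mul s i).symm ▸ hF.mul_le _ _

theorem pow_mem (hF : IsMultiplicativeFiltration F) {i : ℕ} {x : A} (hx : x ∈ F i) (s : ℕ) :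
    x ^ s ∈ F (s * i) :=
  hF.pow_le i s (pow_mem_pow hx s)

theorem multiset_prod_mem (hF : IsMultiplicativeFiltration F) {i : ℕ} (L : Multiset A)
    (hL : ∀ y ∈ L, y ∈ F i) : L.prod ∈ F (Multiset.card L * i) := by
  induction L using Multiset.induction_on with
  | empty => simp [hF.zero_eq_top]
  | cons a L ih =>
    rw [Multiset.prod_cons, Multiset.card_cons, Nat.succ_mul, add_comm]
    exact hF.mul_mem (hL a (Multiset.mem_cons_self a L))
      (ih fun y hy => hL y (Multiset.mem_cons_of_mem hy))

theorem span_singleton_sup_pow_le (hF : IsMultiplicativeFiltration F) {i : ℕ} {u : A}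
    (hu : u ∈ F i) : ∀ s : ℕ, (span {u} ⊔ F (i + 1)) ^ s ≤ span {u ^ s} ⊔ F (s * i + 1)
  | 0 => by simp [one_eq_top]
  | s + 1 => by
    have hus : span {u ^ s} ≤ F (s * i) := (span_singleton_le_iff_mem _).2 (hF.pow_mem hu s)
    have hu1 : span {u} ≤ F i := (span_singleton_le_iff_mem _).2 hu
    have hdeep : ∀ {j k : ℕ}, (s + 1) * i + 1 ≤ j + k → F j * F k ≤ F ((s + 1) * i + 1) :=
      fun h => (hF.mul_le _ _).trans (hF.antitone h)
    calc (span {u} ⊔ F (i + 1)) ^ (s + 1)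
        = (span {u} ⊔ F (i + 1)) ^ s * (span {u} ⊔ F (i + 1)) := pow_succ _ _
      _ ≤ (span {u ^ s} ⊔ F (s * i + 1)) * (span {u} ⊔ F (i + 1)) :=
        mul_mono_left (hF.span_singleton_sup_pow_le hu s)
      _ = span {u ^ s} * span {u} ⊔ span {u ^ s} * F (i + 1)
          ⊔ (F (s * i + 1) * span {u} ⊔ F (s * i + 1) * F (i + 1)) := by
        rw [Ideal.sup_mul, Ideal.mul_sup, Ideal.mul_sup]
      _ ≤ span {u ^ (s + 1)} ⊔ F ((s + 1) * i + 1) := by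
        rw [span_singleton_mul_span_singleton, ← pow_succ]
        refine sup_le (sup_le le_sup_left ?_) (sup_le ?_ ?_) <;> refine le_sup_of_le_right ?_
        · exact (mul_mono_left hus).trans (hdeep (by rw [Nat.succ_mul]; omega))
        · exact (mul_mono_right hu1).trans (hdeep (by rw [Nat.succ_mul]; omega))
        · exact hdeep (by rw [Nat.succ_mul]; omega)

theorem eval_homogenize_mem (hF : IsMultiplicativeFiltration F) {a i : ℕ} {p : A[X]}
    (hp : ∀ k, p.coeff k ∈ F a) {x u : A} (hx : x ∈ F i) (hu : u ∈ F i) (n : ℕ) :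
    MvPolynomial.eval ![x, u] (p.homogenize n) ∈ F (a + n * i) := by
  rw [eval_homogenize_eq_sum]
  refine sum_mem fun kl hkl => ?_
  have hdeg : a + kl.1 * i + kl.2 * i = a + n * i := by
    rw [add_assoc, ← add_mul, mem_antidiagonal.1 hkl]
  exact hdeg ▸ hF.mul_mem (hF.mul_mem (hp _) (hF.pow_mem hx _)) (hF.pow_mem hu _)

theorem exists_monic_eval_homogenize_mem (hF : IsMultiplicativeFiltration F) {i : ℕ}
    {I : Ideal A} {u x : A} (hu : u ∈ F i) (hI : I ≤ span {u} ⊔ F (i + 1)) (hx : x ∈ F i)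
    (hxI : IsIntegralOverIdeal I x) :
    ∃ q : A[X], q.Monic ∧
      MvPolynomial.eval ![x, u] (q.homogenize q.natDegree) ∈ F (q.natDegree * i + 1) := by
  obtain ⟨n, hn, a, ha, heq⟩ := hxI
  have hc : ∀ s ∈ Icc 1 n, ∃ c : A, c * u ^ s - a s ∈ F (s * i + 1) := fun s hs => by
    obtain ⟨y, hy, z, hz, hyz⟩ :=
      Submodule.mem_sup.1 (hF.span_singleton_sup_pow_le hu s (pow_right_mono hI s (ha s hs)))
    obtain ⟨c, rfl⟩ := mem_span_singleton'.1 hy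
    exact ⟨c, by simpa [← hyz] using neg_mem hz⟩
  choose! c hc using hc
  nontriviality A
  set q : A[X] := X ^ n + ∑ s ∈ Icc 1 n, C (c s) * X ^ (n - s)
  have hlt := degree_sum_C_mul_X_pow_sub_lt hn c
  have hdeg : q.natDegree = n := by
    rw [natDegree_add_eq_left_of_degree_lt (by rwa [degree_X_pow]), natDegree_X_pow]
  have heval : MvPolynomial.eval ![x, u] (q.homogenize n) =
      ∑ s ∈ Icc 1 n, (c s * u ^ s - a s) * x ^ (n - s) := by
    simp only [q, eval_homogenize_X_pow_add_sum, sub_mul, sum_sub_distrib]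
    linear_combination heq
  refine ⟨q, monic_X_pow_add hlt, ?_⟩
  rw [hdeg, heval]
  refine sum_mem fun s hs => hF.antitone ?_ (hF.mul_mem (hc s hs) (hF.pow_mem hx (n - s)))
  have hsn : s * i + (n - s) * i = n * i := by
    rw [← add_mul, Nat.add_sub_cancel' (mem_Icc.1 hs).2]
  omega

end IsMultiplicativeFiltration

namespace IsDomainFiltration

variable {F : ℕ → Ideal A}

theorem exists_mem_succ_of_multiset_prod_mem (hF : IsDomainFiltration F) {i : ℕ}
    (L : Multiset A) (hL : ∀ y ∈ L, y ∈ F i) (hprod : L.prod ∈ F (Multiset.card L * i + 1)) :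
    ∃ y ∈ L, y ∈ F (i + 1) := by
  induction L using Multiset.induction_on with
  | empty => exact absurd ((eq_top_iff_one _).2 (by simpa using hprod)) hF.one_ne_top
  | cons a L ih =>
    have hLi : ∀ y ∈ L, y ∈ F i := fun y hy => hL y (Multiset.mem_cons_of_mem hy)
    rw [Multiset.prod_cons, Multiset.card_cons, Nat.succ_mul, add_comm (_ * i)] at hprod
    rcases hF.mem_succ_or_mem_succ_of_mul_mem (hL a (Multiset.mem_cons_self a L))
      (hF.multiset_prod_mem L hLi) hprod with ha | hLprod
    · exact ⟨a, Multiset.mem_cons_self a L, ha⟩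
    · obtain ⟨y, hy, hyF⟩ := ih hLi hLprod
      exact ⟨y, Multiset.mem_cons_of_mem hy, hyF⟩

theorem pow_notMem (hF : IsDomainFiltration F) {d : ℕ} {x : A} (hx : x ∈ F d)
    (hx' : x ∉ F (d + 1)) (m : ℕ) : x ^ m ∉ F (m * d + 1) := by
  intro hm
  obtain ⟨y, hy, hyF⟩ := hF.exists_mem_succ_of_multiset_prod_mem (Multiset.replicate m x)
    (fun y hy => Multiset.eq_of_mem_replicate hy ▸ hx) (by simpa using hm)
  exact hx' (Multiset.eq_of_mem_replicate hy ▸ hyF)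

theorem exists_mem_notMem_succ (hF : IsDomainFiltration F) {x : A} :
    ∀ {i : ℕ}, x ∉ F i → ∃ d < i, x ∈ F d ∧ x ∉ F (d + 1)
  | 0, hx => absurd (hF.zero_eq_top ▸ Submodule.mem_top) hx
  | i + 1, hx => by
    by_cases hxi : x ∈ F i
    · exact ⟨i, lt_add_one i, hxi, hx⟩
    · obtain ⟨d, hdi, hd⟩ := hF.exists_mem_notMem_succ hxi
      exact ⟨d, by omega, hd⟩

theorem idealIsIntegrallyClosed (hF : IsDomainFiltration F) (i : ℕ) :
    IdealIsIntegrallyClosed (F i) := by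
  rintro x ⟨n, -, a, ha, heq⟩
  by_contra hxi
  obtain ⟨d, hdi, hxd, hxd'⟩ := hF.exists_mem_notMem_succ hxi
  refine hF.pow_notMem hxd hxd' n ?_
  rw [eq_neg_of_add_eq_zero_left heq]
  refine neg_mem (sum_mem fun s hs => ?_)
  obtain ⟨hs1, hsn⟩ := mem_Icc.1 hs
  refine hF.antitone ?_ (hF.mul_mem (hF.pow_le i s (ha s hs)) (hF.pow_mem hxd (n - s)))
  have hsd : s * (d + 1) ≤ s * i := Nat.mul_le_mul_left s hdi
  have hnd : s * d + (n - s) * d = n * d := by rw [← add_mul, Nat.add_sub_cancel' hsn]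
  nlinarith

theorem exists_sub_mul_mem_succ [IsLocalRing A] [IsAlgClosed (ResidueField A)]
    (hF : IsDomainFiltration F) (h𝔪 : maximalIdeal A ≤ F 1) {i : ℕ} {x u : A} (hx : x ∈ F i)
    (hu : u ∈ F i) {q : A[X]} (hq : q.Monic)
    (hqxu : MvPolynomial.eval ![x, u] (q.homogenize q.natDegree) ∈ F (q.natDegree * i + 1)) :
    ∃ l : A, x - l * u ∈ F (i + 1) := by
  obtain ⟨L, hcard, hL⟩ := exists_multiset_map_residue_prod_X_sub_C_eq hq
  set r : A[X] := (L.map fun l => X - C l).prod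
  have hqr : ∀ k, (q - r).coeff k ∈ F 1 := fun k => h𝔪 <| by
    rw [← residue_eq_zero_iff, coeff_sub, map_sub, ← coeff_map, ← coeff_map, hL, sub_self]
  have hprod : (L.map fun l => x - l * u).prod ∈ F (q.natDegree * i + 1) := by
    have hdiff := hF.eval_homogenize_mem hqr hx hu q.natDegree
    rw [homogenize_sub, map_sub, add_comm] at hdiff
    rw [← eval_homogenize_multiset_prod_X_sub_C, hcard]
    simpa using sub_mem hqxu hdiff
  obtain ⟨y, hy, hyF⟩ := hF.exists_mem_succ_of_multiset_prod_mem _ (fun y hy => by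
    obtain ⟨l, -, rfl⟩ := Multiset.mem_map.1 hy
    exact sub_mem hx (mul_mem_left _ l hu)) (by rwa [Multiset.card_map, hcard])
  obtain ⟨l, -, rfl⟩ := Multiset.mem_map.1 hy
  exact ⟨l, hyF⟩

theorem idealIsIntegrallyClosed_of_covBy [IsLocalRing A] [IsAlgClosed (ResidueField A)]
    (hF : IsDomainFiltration F) (h𝔪 : maximalIdeal A ≤ F 1) {i : ℕ} {I : Ideal A}
    (hI : I ≤ F i) (hcov : F (i + 1) ⋖ I) : IdealIsIntegrallyClosed I := by
  intro x hx
  obtain ⟨u, huI, huF⟩ := SetLike.exists_of_lt hcov.lt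
  have hxF : x ∈ F i := hF.idealIsIntegrallyClosed i x (hx.mono hI)
  obtain ⟨q, hq, hqxu⟩ := hF.exists_monic_eval_homogenize_mem (hI huI)
    (span_singleton_sup_eq_of_covBy hcov huI huF).ge hxF hx
  obtain ⟨l, hl⟩ := hF.exists_sub_mul_mem_succ h𝔪 hxF (hI huI) hq hqxu
  simpa using I.add_mem (I.mul_mem_left l huI) (hcov.le hl)

end IsDomainFiltration

end

theorem stmt5_general (A : Type*) [CommRing A] [IsLocalRing A]
    [IsAlgClosed (ResidueField A)]
    (F : ℕ → Ideal A) (hF0 : F 0 = ⊤) (hF1 : F 1 = maximalIdeal A)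
    (hanti : ∀ i j : ℕ, i ≤ j → F j ≤ F i)
    (hmul : ∀ i j : ℕ, F i * F j ≤ F (i + j))
    (hdom : ∀ (i j : ℕ) (x y : A), x ∈ F i → y ∈ F j → x * y ∈ F (i + j + 1) →
      x ∈ F (i + 1) ∨ y ∈ F (j + 1))
    (i : ℕ) (I : Ideal A) (hup : I ≤ F i) (hlen : F (i + 1) ⋖ I) :
    IdealIsIntegrallyClosed I := by
  have hF : IsDomainFiltration F :=
    ⟨⟨hF0, hanti, hmul⟩, hF1 ▸ (maximalIdeal.isMaximal A).ne_top, hdom _ _ _ _⟩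
  exact hF.idealIsIntegrallyClosed_of_covBy hF1.ge hup hlen

/-- Example 3.3: with a multiplicative filtration `F` (`F₁ = 𝔪`, `F_i F_j ⊆ F_{i+j}`,
`∩ F_i = 0`) whose associated graded ring is a domain, any ideal `I` with
`F_{i+1} ⊆ I ⊆ F_i` and `length (I/F_{i+1}) = 1` (i.e. `F_{i+1}` covered by `I`)
is integrally closed. -/
theorem stmt5 (A : Type*) [CommRing A] [IsNoetherianRing A] [IsLocalRing A]
    [IsAlgClosed (ResidueField A)]
    (F : ℕ → Ideal A) (hF0 : F 0 = ⊤) (hF1 : F 1 = maximalIdeal A)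
    (hanti : ∀ i j : ℕ, i ≤ j → F j ≤ F i)
    (hmul : ∀ i j : ℕ, F i * F j ≤ F (i + j))
    (hsep : (⨅ i : ℕ, F i) = ⊥)
    (hdom : ∀ (i j : ℕ) (x y : A), x ∈ F i → y ∈ F j → x * y ∈ F (i + j + 1) →
      x ∈ F (i + 1) ∨ y ∈ F (j + 1))
    (i : ℕ) (I : Ideal A) (hlow : F (i + 1) ≤ I) (hup : I ≤ F i) (hlen : F (i + 1) ⋖ I) :
    IdealIsIntegrallyClosed I :=
  stmt5_general A F hF0 hF1 hanti hmul hdom i I hup hlen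
end

section
/- Let (A, 𝔪) be a Noetherian local ring with filtration F = {F_i} satisfying F_i F_j ⊆ F_{i+j}, and suppose x ∈ F_{i-1}, y ∈ F_{i-1}, and y satisfies y^n + a_1 y^{n-1} + ⋯ + a_n = 0 with a_s ∈ (F_i + (x))^s. Then each term of this equation lies in F_{n(i-1)}, and modulo F_{n(i-1)+1} the equation becomes a homogeneous relation of degree n between the images of x and y in the degree-(i−1) part of the associated graded ring G_F. -/
open IsLocalRing

universe u v

theorem stmt15_pow_le (A : Type*) [CommRing A] (F : ℕ → Ideal A) (hF0 : F 0 = ⊤)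
    (hmul : ∀ i j : ℕ, F i * F j ≤ F (i + j)) (k : ℕ) :
    ∀ m : ℕ, F k ^ m ≤ F (m * k) := by
  intro m
  induction m with
  | zero => simp [hF0]
  | succ m ih =>
      calc F k ^ (m + 1) = F k * F k ^ m := by ring
      _ ≤ F k * F (m * k) := Ideal.mul_mono_right ih
      _ ≤ F (k + m * k) := hmul _ _
      _ = F ((m + 1) * k) := by ring_nf

theorem stmt15_key (A : Type*) [CommRing A] (F : ℕ → Ideal A) (hF0 : F 0 = ⊤)
    (hanti : ∀ i j : ℕ, i ≤ j → F j ≤ F i)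
    (hmul : ∀ i j : ℕ, F i * F j ≤ F (i + j))
    (i : ℕ) (x : A) (hx : x ∈ F i) :
    ∀ s : ℕ, (F (i + 1) ⊔ Ideal.span {x}) ^ s ≤ Ideal.span {x ^ s} ⊔ F (s * i + 1) := by
  intro s
  induction s with
  | zero => simp [Ideal.span_singleton_one]
  | succ s ih =>
      have hxs : Ideal.span {x ^ s} ≤ F (s * i) := by
        rw [Ideal.span_singleton_le_iff_mem]
        exact stmt15_pow_le A F hF0 hmul i s (Ideal.pow_mem_pow hx s)
      have hxi : Ideal.span {x} ≤ F i := by rwa [Ideal.span_singleton_le_iff_mem]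
      calc (F (i + 1) ⊔ Ideal.span {x}) ^ (s + 1)
          = (F (i + 1) ⊔ Ideal.span {x}) * (F (i + 1) ⊔ Ideal.span {x}) ^ s := by ring
        _ ≤ (F (i + 1) ⊔ Ideal.span {x}) * (Ideal.span {x ^ s} ⊔ F (s * i + 1)) :=
            Ideal.mul_mono_right ih
        _ ≤ Ideal.span {x ^ (s + 1)} ⊔ F ((s + 1) * i + 1) := by
            rw [Ideal.sup_mul, Ideal.mul_sup, Ideal.mul_sup]
            apply sup_le
            · apply sup_le
              · refine le_trans ?_ le_sup_right
                refine le_trans (Ideal.mul_mono_right hxs) ?_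
                refine le_trans (hmul _ _) (hanti _ _ ?_)
                have h' : (s + 1) * i = s * i + i := by ring
                omega
              · refine le_trans ?_ le_sup_right
                refine le_trans (hmul _ _) (hanti _ _ ?_)
                have h' : (s + 1) * i = s * i + i := by ring
                omega
            · apply sup_le
              · refine le_trans ?_ le_sup_left
                rw [Ideal.span_singleton_mul_span_singleton, pow_succ, mul_comm]
              · refine le_trans ?_ le_sup_right
                refine le_trans (Ideal.mul_mono_left hxi) ?_
                refine le_trans (hmul _ _) (hanti _ _ ?_)
                have h' : (s + 1) * i = s * i + i := by ring
                omega

/-- In a Noetherian local ring with a multiplicative filtration `F`, if `x, y ∈ F_i`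
(playing the role of `F_{i-1}`) and `y` satisfies an integral equation
`y^n + a₁ y^{n-1} + ⋯ + a_n = 0` with `a_s ∈ (F_{i+1} + (x))^s`, then every term of the
equation lies in `F_{n·i}`, and modulo `F_{n·i + 1}` the equation becomes a homogeneous
relation `y^n + c₁ x y^{n-1} + ⋯ + c_n x^n ≡ 0` between the initial forms of `x` and `y`,
with `a_s ≡ c_s x^s mod F_{s·i + 1}` for scalars `c_s` (representatives in `A` of elements
of the residue field). -/
theorem stmt15 (A : Type*) [CommRing A] [IsNoetherianRing A] [IsLocalRing A]
    (F : ℕ → Ideal A) (hF0 : F 0 = ⊤) (hF1 : F 1 = maximalIdeal A)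
    (hanti : ∀ i j : ℕ, i ≤ j → F j ≤ F i)
    (hmul : ∀ i j : ℕ, F i * F j ≤ F (i + j))
    (i : ℕ) (x y : A) (hx : x ∈ F i) (hy : y ∈ F i)
    (n : ℕ) (hn : 0 < n) (a : ℕ → A)
    (ha : ∀ s ∈ Finset.Icc 1 n, a s ∈ (F (i + 1) ⊔ Ideal.span {x}) ^ s)
    (heq : y ^ n + ∑ s ∈ Finset.Icc 1 n, a s * y ^ (n - s) = 0) :
    (y ^ n ∈ F (n * i) ∧ ∀ s ∈ Finset.Icc 1 n, a s * y ^ (n - s) ∈ F (n * i)) ∧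
    ∃ c : ℕ → A,
      (∀ s ∈ Finset.Icc 1 n, a s - c s * x ^ s ∈ F (s * i + 1)) ∧
      y ^ n + ∑ s ∈ Finset.Icc 1 n, c s * x ^ s * y ^ (n - s) ∈ F (n * i + 1) := by
  have hpow := stmt15_pow_le A F hF0 hmul
  -- membership of y powers
  have hyp : ∀ m : ℕ, y ^ m ∈ F (m * i) := fun m => hpow i m (Ideal.pow_mem_pow hy m)
  -- a_s ∈ F (s*i)
  have haF : ∀ s ∈ Finset.Icc 1 n, a s ∈ F (s * i) := by
    intro s hs
    have h : a s ∈ Ideal.span {x ^ s} ⊔ F (s * i + 1) :=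
      stmt15_key A F hF0 hanti hmul i x hx s (ha s hs)
    have h2 : Ideal.span {x ^ s} ⊔ F (s * i + 1) ≤ F (s * i) := by
      apply sup_le
      · rw [Ideal.span_singleton_le_iff_mem]
        exact hpow i s (Ideal.pow_mem_pow hx s)
      · exact hanti _ _ (Nat.le_succ _)
    exact h2 h
  -- choose c
  have hc : ∀ s : ℕ, s ∈ Finset.Icc 1 n → ∃ c : A, a s - c * x ^ s ∈ F (s * i + 1) := by
    intro s hs
    have h : a s ∈ Ideal.span {x ^ s} ⊔ F (s * i + 1) :=
      stmt15_key A F hF0 hanti hmul i x hx s (ha s hs)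
    rcases Submodule.mem_sup.mp h with ⟨u, hu, v, hv, huv⟩
    rcases Ideal.mem_span_singleton'.mp hu with ⟨c, rfl⟩
    exact ⟨c, by rw [← huv]; simpa using hv⟩
  choose! c hcspec using hc
  refine ⟨⟨hyp n, ?_⟩, c, hcspec, ?_⟩
  · intro s hs
    have hsle : s ≤ n := (Finset.mem_Icc.mp hs).2
    have : a s * y ^ (n - s) ∈ F (s * i + (n - s) * i) :=
      hmul _ _ (Ideal.mul_mem_mul (haF s hs) (hyp (n - s)))
    have heqn : s * i + (n - s) * i = n * i := by
      rw [← Nat.add_mul]; congr 1; omega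
    rwa [heqn] at this
  · have key : y ^ n + ∑ s ∈ Finset.Icc 1 n, c s * x ^ s * y ^ (n - s)
        = - ∑ s ∈ Finset.Icc 1 n, (a s - c s * x ^ s) * y ^ (n - s) := by
      simp only [sub_mul, Finset.sum_sub_distrib]
      linear_combination heq
    rw [key]
    apply neg_mem
    apply Ideal.sum_mem
    intro s hs
    have hsle : s ≤ n := (Finset.mem_Icc.mp hs).2
    have hs1 : 1 ≤ s := (Finset.mem_Icc.mp hs).1
    have : (a s - c s * x ^ s) * y ^ (n - s) ∈ F ((s * i + 1) + (n - s) * i) :=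
      hmul _ _ (Ideal.mul_mem_mul (hcspec s hs) (hyp (n - s)))
    have heqn : (s * i + 1) + (n - s) * i = n * i + 1 := by
      have : s * i + (n - s) * i = n * i := by rw [← Nat.add_mul]; congr 1; omega
      omega
    rwa [heqn] at this
end
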